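/- arXiv:1006.2977 — 5 statements merged into one kernel-verified Lean document; each statement's English description precedes it below -/
import Mathlib

section
/- Suppose the stacked N × N matrix M (whose rows are the rows of M1, M2, M3) has rank N, i.e., its kernel is trivial. Then the subcode C1 = ker M1 ∩ ker M3 has dimension K1 and the subcode C2 = ker M2 ∩ ker M3 has dimension K2 as subspaces of F2^N. -/
lemma aux_finrank_ker {F V W U : Type*} [Field F] [AddCommGroup V] [Module F V]
    [AddCommGroup W] [Module F W] [AddCommGroup U] [Module F U]
    [FiniteDimensional F V] [FiniteDimensional F W] [FiniteDimensional F U]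
    (g : V →ₗ[F] W) (h : V →ₗ[F] U)
    (hdim : Module.finrank F V = Module.finrank F W + Module.finrank F U)
    (hinj : ∀ x, g x = 0 → h x = 0 → x = 0) :
    Module.finrank F (LinearMap.ker g) = Module.finrank F U := by
  have h1 : Module.finrank F (LinearMap.ker g) ≤ Module.finrank F U := by
    apply LinearMap.finrank_le_finrank_of_injective
      (f := h.domRestrict (LinearMap.ker g))
    rw [← LinearMap.ker_eq_bot, LinearMap.ker_eq_bot']
    intro x hx
    exact Subtype.ext (hinj x.1 x.2 hx)
  have h2 : Module.finrank F (LinearMap.range g) ≤ Module.finrank F W :=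
    Submodule.finrank_le _
  have h3 := LinearMap.finrank_range_add_finrank_ker g
  omega

/-- If the stacked N × N matrix M = [M1; M2; M3] over F2 has rank N
(equivalently, trivial kernel), then the subcode C1 = ker M1 ∩ ker M3 has dimension K1
and the subcode C2 = ker M2 ∩ ker M3 has dimension K2 as subspaces of F2^N. -/
theorem stmt_0 (N K1 K2 : ℕ) (hK : K1 + K2 ≤ N)
    (M1 : Matrix (Fin K2) (Fin N) (ZMod 2))
    (M2 : Matrix (Fin K1) (Fin N) (ZMod 2))
    (M3 : Matrix (Fin (N - K1 - K2)) (Fin N) (ZMod 2))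
    (hrank : (Matrix.fromRows M1 (Matrix.fromRows M2 M3)).rank = N) :
    Module.finrank (ZMod 2)
      ↥(LinearMap.ker M1.mulVecLin ⊓ LinearMap.ker M3.mulVecLin) = K1 ∧
    Module.finrank (ZMod 2)
      ↥(LinearMap.ker M2.mulVecLin ⊓ LinearMap.ker M3.mulVecLin) = K2 := by
  set A := Matrix.fromRows M1 (Matrix.fromRows M2 M3) with hA
  have hkerA : LinearMap.ker A.mulVecLin = ⊥ := by
    have h3 := LinearMap.finrank_range_add_finrank_ker A.mulVecLin
    rw [show Module.finrank (ZMod 2) (LinearMap.range A.mulVecLin) = A.rank from rfl,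
      hrank] at h3
    have hN : Module.finrank (ZMod 2) (Fin N → ZMod 2) = N := by simp
    rw [hN] at h3
    exact Submodule.finrank_eq_zero.mp (by omega)
  have key : ∀ x : Fin N → ZMod 2, M1.mulVecLin x = 0 → M2.mulVecLin x = 0 →
      M3.mulVecLin x = 0 → x = 0 := by
    intro x h1 h2 h3
    have hx : A.mulVecLin x = 0 := by
      simp only [Matrix.mulVecLin_apply] at h1 h2 h3 ⊢
      rw [hA, Matrix.fromRows_mulVec, Matrix.fromRows_mulVec, h1, h2, h3]
      ext i
      rcases i with i | i
      · rfl
      · rcases i with i | i <;> rfl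
    have hmem : x ∈ LinearMap.ker A.mulVecLin := hx
    rw [hkerA] at hmem
    simpa using hmem
  constructor
  · have := aux_finrank_ker ((M1.mulVecLin).prod M3.mulVecLin) M2.mulVecLin
      (by simp [Module.finrank_prod]; omega)
      (by
        intro x hg hh
        have hg1 := congrArg Prod.fst hg
        have hg2 := congrArg Prod.snd hg
        exact key x hg1 hh hg2)
    rw [LinearMap.ker_prod] at this
    simpa using this
  · have := aux_finrank_ker ((M2.mulVecLin).prod M3.mulVecLin) M1.mulVecLin
      (by simp [Module.finrank_prod]; omega)
      (by
        intro x hg hh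
        have hg1 := congrArg Prod.fst hg
        have hg2 := congrArg Prod.snd hg
        exact key x hh hg1 hg2)
    rw [LinearMap.ker_prod] at this
    simpa using this
end

section
/- Suppose the stacked N × N matrix M has rank N. Then C1 ∩ C2 = {0}, C1 + C2 = ker M3, and dim (ker M3) = K1 + K2; that is, the global code C is the internal direct sum of the two subcodes C1 and C2. -/
/-!
Full rank of the stacked matrix means `ker M1 ⊓ ker M2 ⊓ ker M3 = ⊥`. Hence `C1 ⊓ C2 = ⊥`, and
`M1`, `M2` are jointly injective on `ker M3`, so `dim ker M3 ≤ K1 + K2`. Counting rows gives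
`dim C1 ≥ K1` and `dim C2 ≥ K2`, so the disjoint subspaces `C1, C2 ≤ ker M3` already fill it.
-/

open LinearMap Module

theorem LinearMap.finrank_le_of_disjoint_ker {K V W : Type*} [DivisionRing K] [AddCommGroup V]
    [Module K V] [AddCommGroup W] [Module K W] [FiniteDimensional K W] (f : V →ₗ[K] W)
    {S : Submodule K V} (h : Disjoint (ker f) S) : finrank K S ≤ finrank K W :=
  finrank_le_finrank_of_injective (f := f.domRestrict S) <| by
    rwa [← ker_eq_bot, ker_domRestrict, ← Submodule.disjoint_iff_comap_eq_bot, disjoint_comm]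

theorem Submodule.sup_eq_of_disjoint_of_finrank_le {K V : Type*} [DivisionRing K] [AddCommGroup V]
    [Module K V] [FiniteDimensional K V] {S T U : Submodule K V} (hS : S ≤ U) (hT : T ≤ U)
    (hST : Disjoint S T) (hdim : finrank K U ≤ finrank K S + finrank K T) : S ⊔ T = U := by
  refine Submodule.eq_of_le_of_finrank_le (sup_le hS hT) ?_
  rwa [← Submodule.finrank_sup_add_finrank_inf_eq, hST.eq_bot, finrank_bot, add_zero] at hdim

namespace Matrix

theorem ker_mulVecLin_fromRows {R : Type*} [CommSemiring R] {m₁ m₂ n : Type*} [Fintype n]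
    (A : Matrix m₁ n R) (B : Matrix m₂ n R) :
    ker (A.fromRows B).mulVecLin = ker A.mulVecLin ⊓ ker B.mulVecLin := by
  ext x
  simp [funext_iff, Sum.forall]

variable {K : Type*} [Field K] {m n : Type*} [Fintype n]

theorem rank_add_finrank_ker_mulVecLin (A : Matrix m n K) :
    A.rank + finrank K (ker A.mulVecLin) = Fintype.card n := by
  simpa [Matrix.rank] using finrank_range_add_finrank_ker A.mulVecLin

theorem card_sub_card_le_finrank_ker_mulVecLin [Fintype m] (A : Matrix m n K) :
    Fintype.card n - Fintype.card m ≤ finrank K (ker A.mulVecLin) := by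
  have := A.rank_add_finrank_ker_mulVecLin
  have := A.rank_le_card_height
  omega

theorem ker_mulVecLin_eq_bot_of_rank_eq_card {A : Matrix m n K} (h : A.rank = Fintype.card n) :
    ker A.mulVecLin = ⊥ := by
  have := A.rank_add_finrank_ker_mulVecLin
  exact Submodule.finrank_eq_zero.mp (by omega)

section Stacked

variable {m₁ m₂ m₃ : Type*}
  {A : Matrix m₁ n K} {B : Matrix m₂ n K} {C : Matrix m₃ n K}

theorem inf_inf_ker_mulVecLin_eq_bot (hrank : (A.fromRows (B.fromRows C)).rank = Fintype.card n) :
    ker A.mulVecLin ⊓ (ker B.mulVecLin ⊓ ker C.mulVecLin) = ⊥ := by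
  rw [← ker_mulVecLin_fromRows, ← ker_mulVecLin_fromRows]
  exact ker_mulVecLin_eq_bot_of_rank_eq_card hrank

theorem disjoint_inf_ker_mulVecLin (hrank : (A.fromRows (B.fromRows C)).rank = Fintype.card n) :
    Disjoint (ker A.mulVecLin ⊓ ker C.mulVecLin) (ker B.mulVecLin ⊓ ker C.mulVecLin) := by
  rw [disjoint_iff_inf_le, ← inf_inf_ker_mulVecLin_eq_bot hrank]
  exact le_inf (inf_le_left.trans inf_le_left) inf_le_right

theorem finrank_ker_mulVecLin_le [Fintype m₁] [Fintype m₂]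
    (hrank : (A.fromRows (B.fromRows C)).rank = Fintype.card n) :
    finrank K (ker C.mulVecLin) ≤ Fintype.card m₁ + Fintype.card m₂ := by
  have hdisj : Disjoint (ker (A.fromRows B).mulVecLin) (ker C.mulVecLin) := by
    rw [disjoint_iff, ker_mulVecLin_fromRows, inf_assoc]
    exact inf_inf_ker_mulVecLin_eq_bot hrank
  simpa using (A.fromRows B).mulVecLin.finrank_le_of_disjoint_ker hdisj

theorem sup_inf_ker_mulVecLin_eq_and_finrank_ker_eq [Fintype m₁] [Fintype m₂] [Fintype m₃]
    (hcard : Fintype.card m₁ + Fintype.card m₂ + Fintype.card m₃ ≤ Fintype.card n)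
    (hrank : (A.fromRows (B.fromRows C)).rank = Fintype.card n) :
    (ker A.mulVecLin ⊓ ker C.mulVecLin) ⊔ (ker B.mulVecLin ⊓ ker C.mulVecLin) = ker C.mulVecLin ∧
      finrank K (ker C.mulVecLin) = Fintype.card m₁ + Fintype.card m₂ := by
  have hdisj := disjoint_inf_ker_mulVecLin hrank
  have hdimAC := (A.fromRows C).card_sub_card_le_finrank_ker_mulVecLin
  have hdimBC := (B.fromRows C).card_sub_card_le_finrank_ker_mulVecLin
  rw [ker_mulVecLin_fromRows, Fintype.card_sum] at hdimAC hdimBC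
  have hdimC := finrank_ker_mulVecLin_le hrank
  have hsup := Submodule.sup_eq_of_disjoint_of_finrank_le inf_le_right inf_le_right hdisj
    (by omega)
  refine ⟨hsup, ?_⟩
  have := Submodule.finrank_sup_add_finrank_inf_eq (ker A.mulVecLin ⊓ ker C.mulVecLin)
    (ker B.mulVecLin ⊓ ker C.mulVecLin)
  rw [hsup, hdisj.eq_bot, finrank_bot] at this
  omega

end Stacked

end Matrix

/-- If the stacked N × N matrix M = [M1; M2; M3] over F2 has rank N, then
C1 ∩ C2 = {0}, C1 + C2 = ker M3, and dim (ker M3) = K1 + K2; i.e. the global code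
C = ker M3 is the internal direct sum of the subcodes C1 = ker M1 ∩ ker M3 and
C2 = ker M2 ∩ ker M3. -/
theorem stmt_1 (N K1 K2 : ℕ) (hK : K1 + K2 ≤ N)
    (M1 : Matrix (Fin K2) (Fin N) (ZMod 2))
    (M2 : Matrix (Fin K1) (Fin N) (ZMod 2))
    (M3 : Matrix (Fin (N - K1 - K2)) (Fin N) (ZMod 2))
    (hrank : (Matrix.fromRows M1 (Matrix.fromRows M2 M3)).rank = N) :
    (LinearMap.ker M1.mulVecLin ⊓ LinearMap.ker M3.mulVecLin) ⊓
      (LinearMap.ker M2.mulVecLin ⊓ LinearMap.ker M3.mulVecLin) = ⊥ ∧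
    (LinearMap.ker M1.mulVecLin ⊓ LinearMap.ker M3.mulVecLin) ⊔
      (LinearMap.ker M2.mulVecLin ⊓ LinearMap.ker M3.mulVecLin) =
      LinearMap.ker M3.mulVecLin ∧
    Module.finrank (ZMod 2) ↥(LinearMap.ker M3.mulVecLin) = K1 + K2 := by
  replace hrank := hrank.trans (Fintype.card_fin N).symm
  have hcard : Fintype.card (Fin K2) + Fintype.card (Fin K1) + Fintype.card (Fin (N - K1 - K2))
      ≤ Fintype.card (Fin N) := by
    simp only [Fintype.card_fin]; omega
  obtain ⟨hsup, hdim⟩ := Matrix.sup_inf_ker_mulVecLin_eq_and_finrank_ker_eq hcard hrank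
  refine ⟨(Matrix.disjoint_inf_ker_mulVecLin hrank).eq_bot, hsup, ?_⟩
  simpa [add_comm] using hdim
end

section
/- Let w : ZMod k → V (k ≥ 3) be an injective map with w t adjacent to w (t+1) in G for every t (a k-cycle in G), and let π be its net voltage. Let S be the simple graph whose vertex set is {(u, i) ∈ V × Fin n : u lies in the range of w} and in which (u, i) and (v, j) are adjacent if and only if they are adjacent in the permutation derived graph Ĝ and {u, v} = {w t, w (t+1)} for some t (the preimage of the cycle in the derived graph). Then the number of connected components of S equals the number of orbits of the cyclic group generated by π acting on Fin n. -/
/-- The permutation derived graph of a simple graph `G` under a permutation voltage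
assignment `α` (with `α v u = (α u v)⁻¹`). -/
def derivedGraph {V : Type*} {n : ℕ} (G : SimpleGraph V)
    (α : V → V → Equiv.Perm (Fin n))
    (hα : ∀ u v, α v u = (α u v)⁻¹) : SimpleGraph (V × Fin n) where
  Adj p q := G.Adj p.1 q.1 ∧ q.2 = α p.1 q.1 p.2
  symm := by
    constructor
    rintro ⟨u, i⟩ ⟨v, j⟩ ⟨hadj, hj⟩
    simp only at hadj hj ⊢
    subst hj
    exact ⟨hadj.symm, by simp [hα u v]⟩
  loopless := by
    constructor
    rintro ⟨u, i⟩ ⟨hadj, -⟩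
    exact G.irrefl hadj

/-- The net voltage of the closed walk `w 0, w 1, …, w (k-1), w 0` given by
`w : ZMod k → V`: the product of the edge voltages `α (w t) (w (t+1))` in the order of
traversal. -/
def netVoltage {V : Type*} {n : ℕ} (α : V → V → Equiv.Perm (Fin n))
    {k : ℕ} (w : ZMod k → V) : Equiv.Perm (Fin n) :=
  (((List.range k).map fun t => α (w t) (w (t + 1))).reverse).prod

/-- The preimage in the derived graph of the cycle given by `w : ZMod k → V`: the simple
graph on the vertices of `V × Fin n` lying over the range of `w`, where two vertices are
adjacent iff they are adjacent in the derived graph and the pair of their first coordinates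
is `{w t, w (t+1)}` for some `t`. -/
def cyclePreimage {V : Type*} {n k : ℕ} (G : SimpleGraph V)
    (α : V → V → Equiv.Perm (Fin n)) (hα : ∀ u v, α v u = (α u v)⁻¹)
    (w : ZMod k → V) :
    SimpleGraph {p : V × Fin n // p.1 ∈ Set.range w} where
  Adj s t := (derivedGraph G α hα).Adj s.1 t.1 ∧
    ∃ τ : ZMod k, ({s.1.1, t.1.1} : Set V) = {w τ, w (τ + 1)}
  symm := by
    constructor
    rintro s t ⟨h1, τ, h2⟩
    exact ⟨(derivedGraph G α hα).adj_symm h1, τ, by rw [Set.pair_comm]; exact h2⟩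
  loopless := by
    constructor
    rintro s ⟨h1, -⟩
    exact (derivedGraph G α hα).irrefl h1

/-!
Write `P t` for the product of the voltages along the path `w 0, w 1, …, w t`, so that
`P k = π` and `P (t + k) = P t * π`. Along the preimage of the cycle one can only walk
from `(w t, P t j)` to `(w (t + 1), P (t + 1) j)` or back, so the vertex `(w τ, i)` with
`0 ≤ τ < k` determines the sheet `(P τ)⁻¹ i`, which is invariant up to `⟨π⟩` because
closing the cycle changes the sheet by `π`. Conversely `(w 0, j)` reaches `(w 0, π j)`
by going once around. Hence components correspond to `⟨π⟩`-orbits.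
-/
theorem SimpleGraph.Reachable.rel_of_forall_adj {X Y : Type*} {S : SimpleGraph X}
    (r : Setoid Y) {f : X → Y} (hf : ∀ a b, S.Adj a b → r (f a) (f b)) {a b : X}
    (h : S.Reachable a b) : r (f a) (f b) := by
  obtain ⟨p⟩ := h
  induction p with
  | nil => exact r.refl' _
  | cons h _ ih => exact r.trans' (hf _ _ h) ih

def SimpleGraph.connectedComponentEquivQuotient {X Y : Type*} (S : SimpleGraph X)
    (r : Setoid Y) (f : X → Y) (g : Y → X) (hf : ∀ a b, S.Adj a b → r (f a) (f b))
    (hg : ∀ a b, r a b → S.Reachable (g a) (g b)) (hfg : ∀ y, r (f (g y)) y)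
    (hgf : ∀ x, S.Reachable (g (f x)) x) : S.ConnectedComponent ≃ Quotient r where
  toFun := SimpleGraph.ConnectedComponent.lift (fun x => Quotient.mk r (f x)) fun _ _ p _ =>
    Quotient.sound (p.reachable.rel_of_forall_adj r hf)
  invFun := Quotient.lift (fun y => S.connectedComponentMk (g y)) fun _ _ h =>
    SimpleGraph.ConnectedComponent.sound (hg _ _ h)
  left_inv C := C.ind fun x => SimpleGraph.ConnectedComponent.sound (hgf x)
  right_inv q := Quotient.inductionOn q fun y => Quotient.sound (hfg y)

section PartialNetVoltage

variable {V : Type*} {n k : ℕ} (α : V → V → Equiv.Perm (Fin n)) (w : ZMod k → V)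

def partialNetVoltage (t : ℕ) : Equiv.Perm (Fin n) :=
  (((List.range t).map fun s => α (w s) (w (s + 1))).reverse).prod

@[simp]
theorem partialNetVoltage_zero : partialNetVoltage α w 0 = 1 := by
  simp [partialNetVoltage]

theorem partialNetVoltage_succ (t : ℕ) :
    partialNetVoltage α w (t + 1) = α (w t) (w (t + 1)) * partialNetVoltage α w t := by
  simp [partialNetVoltage, List.range_succ]

theorem partialNetVoltage_self : partialNetVoltage α w k = netVoltage α w := rfl

theorem partialNetVoltage_add_self (t : ℕ) :
    partialNetVoltage α w (t + k) = partialNetVoltage α w t * netVoltage α w := by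
  induction t with
  | zero => simp [partialNetVoltage_self]
  | succ t ih =>
    rw [Nat.add_right_comm, partialNetVoltage_succ, ih, partialNetVoltage_succ, mul_assoc]
    simp

theorem partialNetVoltage_add_mul_self (t m : ℕ) :
    partialNetVoltage α w (t + k * m) = partialNetVoltage α w t * netVoltage α w ^ m := by
  induction m with
  | zero => simp
  | succ m ih =>
    rw [Nat.mul_succ, ← add_assoc, partialNetVoltage_add_self, ih, pow_succ, mul_assoc]

end PartialNetVoltage

theorem Equiv.Perm.orbitRel_zpowers_iff_sameCycle {X : Type*} (σ : Equiv.Perm X) (a b : X) :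
    MulAction.orbitRel (Subgroup.zpowers σ) X a b ↔ σ.SameCycle b a := by
  rw [MulAction.orbitRel_apply, MulAction.mem_orbit_iff]
  constructor
  · rintro ⟨⟨_, m, rfl⟩, h⟩
    exact ⟨m, h⟩
  · rintro ⟨m, h⟩
    exact ⟨⟨σ ^ m, m, rfl⟩, h⟩

section CyclePreimage

variable {V : Type*} {n k : ℕ} (G : SimpleGraph V) (α : V → V → Equiv.Perm (Fin n))
  (hα : ∀ u v, α v u = (α u v)⁻¹) (w : ZMod k → V)

def cycleVertex (τ : ZMod k) (i : Fin n) : {p : V × Fin n // p.1 ∈ Set.range w} :=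
  ⟨(w τ, i), τ, rfl⟩

theorem cyclePreimage_adj_cycleVertex (hadj : ∀ t : ZMod k, G.Adj (w t) (w (t + 1)))
    (τ : ZMod k) (i : Fin n) :
    (cyclePreimage G α hα w).Adj (cycleVertex w τ i)
      (cycleVertex w (τ + 1) (α (w τ) (w (τ + 1)) i)) :=
  ⟨⟨hadj τ, rfl⟩, τ, rfl⟩

theorem exists_cycleVertex_of_cyclePreimage_adj {a b : {p : V × Fin n // p.1 ∈ Set.range w}}
    (h : (cyclePreimage G α hα w).Adj a b) :
    ∃ τ i, (a = cycleVertex w τ i ∧ b = cycleVertex w (τ + 1) (α (w τ) (w (τ + 1)) i)) ∨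
      (b = cycleVertex w τ i ∧ a = cycleVertex w (τ + 1) (α (w τ) (w (τ + 1)) i)) := by
  obtain ⟨⟨u, i⟩, hu⟩ := a
  obtain ⟨⟨v, j⟩, hv⟩ := b
  obtain ⟨⟨-, hj : j = α u v i⟩, τ, hpair : ({u, v} : Set V) = _⟩ := h
  refine ⟨τ, ?_⟩
  rcases Set.pair_eq_pair_iff.mp hpair with ⟨rfl, rfl⟩ | ⟨rfl, rfl⟩
  · exact ⟨i, Or.inl ⟨rfl, by rw [hj]; rfl⟩⟩
  · refine ⟨j, Or.inr ⟨rfl, ?_⟩⟩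
    rw [hj, hα]
    simp [cycleVertex]

theorem reachable_cycleVertex_partialNetVoltage (hadj : ∀ t : ZMod k, G.Adj (w t) (w (t + 1)))
    (t : ℕ) (j : Fin n) :
    (cyclePreimage G α hα w).Reachable (cycleVertex w 0 j)
      (cycleVertex w t (partialNetVoltage α w t j)) := by
  induction t with
  | zero => simp
  | succ t ih =>
    rw [partialNetVoltage_succ, Equiv.Perm.mul_apply, Nat.cast_succ]
    exact ih.trans (cyclePreimage_adj_cycleVertex G α hα w hadj _ _).reachable

theorem reachable_cycleVertex_of_sameCycle (hadj : ∀ t : ZMod k, G.Adj (w t) (w (t + 1)))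
    {i j : Fin n} (h : (netVoltage α w).SameCycle i j) :
    (cyclePreimage G α hα w).Reachable (cycleVertex w 0 i) (cycleVertex w 0 j) := by
  obtain ⟨m, rfl⟩ := h.exists_nat_pow_eq
  clear h
  induction m with
  | zero => rfl
  | succ m ih =>
    have hloop :=
      reachable_cycleVertex_partialNetVoltage G α hα w hadj k ((netVoltage α w ^ m) i)
    rw [ZMod.natCast_self, partialNetVoltage_self] at hloop
    rw [pow_succ', Equiv.Perm.mul_apply]
    exact ih.trans hloop

noncomputable def cycleLift (hw : Function.Injective w)
    (v : {p : V × Fin n // p.1 ∈ Set.range w}) : Fin n :=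
  (partialNetVoltage α w ((Equiv.ofInjective w hw).symm ⟨v.1.1, v.2⟩).val)⁻¹ v.1.2

theorem cycleLift_cycleVertex (hw : Function.Injective w) (τ : ZMod k) (i : Fin n) :
    cycleLift α w hw (cycleVertex w τ i) = (partialNetVoltage α w τ.val)⁻¹ i := by
  simp [cycleLift, cycleVertex, Equiv.ofInjective_symm_apply]

theorem cycleLift_natCast_rel (hw : Function.Injective w) (t : ℕ) (i : Fin n) :
    MulAction.orbitRel (Subgroup.zpowers (netVoltage α w)) (Fin n)
      (cycleLift α w hw (cycleVertex w t i)) ((partialNetVoltage α w t)⁻¹ i) := by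
  rw [Equiv.Perm.orbitRel_zpowers_iff_sameCycle, cycleLift_cycleVertex, ZMod.val_natCast]
  conv_lhs => rw [← Nat.mod_add_div t k, partialNetVoltage_add_mul_self]
  exact ⟨((t / k : ℕ) : ℤ), by
    rw [zpow_natCast, mul_inv_rev, ← Equiv.Perm.mul_apply, mul_inv_cancel_left]⟩

theorem cycleLift_rel_step [NeZero k] (hw : Function.Injective w) (τ : ZMod k)
    (i : Fin n) :
    MulAction.orbitRel (Subgroup.zpowers (netVoltage α w)) (Fin n)
      (cycleLift α w hw (cycleVertex w τ i))
      (cycleLift α w hw (cycleVertex w (τ + 1) (α (w τ) (w (τ + 1)) i))) := by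
  obtain ⟨t, rfl⟩ : ∃ t : ℕ, (t : ZMod k) = τ := ⟨τ.val, ZMod.natCast_zmod_val τ⟩
  have hstep := cycleLift_natCast_rel α w hw (t + 1) (α (w t) (w (t + 1)) i)
  rw [partialNetVoltage_succ, mul_inv_rev, Equiv.Perm.mul_apply,
    ← Equiv.Perm.mul_apply (α (w t) (w (t + 1)))⁻¹, inv_mul_cancel, Equiv.Perm.one_apply,
    Nat.cast_succ] at hstep
  exact Setoid.trans' _ (cycleLift_natCast_rel α w hw t i) (Setoid.symm' _ hstep)

theorem cycleLift_rel_of_cyclePreimage_adj [NeZero k] (hw : Function.Injective w)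
    {a b : {p : V × Fin n // p.1 ∈ Set.range w}} (h : (cyclePreimage G α hα w).Adj a b) :
    MulAction.orbitRel (Subgroup.zpowers (netVoltage α w)) (Fin n)
      (cycleLift α w hw a) (cycleLift α w hw b) := by
  obtain ⟨τ, i, ⟨rfl, rfl⟩ | ⟨rfl, rfl⟩⟩ :=
    exists_cycleVertex_of_cyclePreimage_adj G α hα w h
  · exact cycleLift_rel_step α w hw τ i
  · exact Setoid.symm' _ (cycleLift_rel_step α w hw τ i)

theorem reachable_cycleVertex_cycleLift [NeZero k]
    (hadj : ∀ t : ZMod k, G.Adj (w t) (w (t + 1))) (hw : Function.Injective w)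
    (v : {p : V × Fin n // p.1 ∈ Set.range w}) :
    (cyclePreimage G α hα w).Reachable (cycleVertex w 0 (cycleLift α w hw v)) v := by
  obtain ⟨⟨u, i⟩, τ, rfl : w τ = u⟩ := v
  change (cyclePreimage G α hα w).Reachable
    (cycleVertex w 0 (cycleLift α w hw (cycleVertex w τ i))) (cycleVertex w τ i)
  simpa [ZMod.natCast_zmod_val, cycleLift_cycleVertex] using
    reachable_cycleVertex_partialNetVoltage G α hα w hadj τ.val
      (cycleLift α w hw (cycleVertex w τ i))

end CyclePreimage

theorem stmt_9_general {V : Type*} {n k : ℕ} (hk : 3 ≤ k)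
    (G : SimpleGraph V) (α : V → V → Equiv.Perm (Fin n))
    (hα : ∀ u v, α v u = (α u v)⁻¹)
    (w : ZMod k → V) (hw : Function.Injective w)
    (hadj : ∀ t : ZMod k, G.Adj (w t) (w (t + 1))) :
    Nat.card (cyclePreimage G α hα w).ConnectedComponent =
      Nat.card (MulAction.orbitRel.Quotient
        (Subgroup.zpowers (netVoltage α w)) (Fin n)) := by
  have : NeZero k := ⟨by omega⟩
  refine Nat.card_congr <| (cyclePreimage G α hα w).connectedComponentEquivQuotient _
    (cycleLift α w hw) (cycleVertex w 0)
    (fun _ _ h => cycleLift_rel_of_cyclePreimage_adj G α hα w hw h) (fun _ _ h => ?_)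
    (fun i => ?_) (reachable_cycleVertex_cycleLift G α hα w hadj hw)
  · exact (reachable_cycleVertex_of_sameCycle G α hα w hadj
      ((Equiv.Perm.orbitRel_zpowers_iff_sameCycle _ _ _).mp h)).symm
  · rw [cycleLift_cycleVertex, ZMod.val_zero, partialNetVoltage_zero]
    exact Setoid.refl' _ i

/-- Let `w : ZMod k → V` (k ≥ 3) be an injective map with `w t` adjacent to
`w (t+1)` in `G` for all `t` (a k-cycle in G), and let π be its net voltage. Then the
number of connected components of the preimage of the cycle in the permutation derived
graph equals the number of orbits of ⟨π⟩ acting on Fin n. -/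
theorem stmt_9 {V : Type*} {n k : ℕ} (hn : 1 ≤ n) (hk : 3 ≤ k)
    (G : SimpleGraph V) (α : V → V → Equiv.Perm (Fin n))
    (hα : ∀ u v, α v u = (α u v)⁻¹)
    (w : ZMod k → V) (hw : Function.Injective w)
    (hadj : ∀ t : ZMod k, G.Adj (w t) (w (t + 1))) :
    Nat.card (cyclePreimage G α hα w).ConnectedComponent =
      Nat.card (MulAction.orbitRel.Quotient
        (Subgroup.zpowers (netVoltage α w)) (Fin n)) :=
  stmt_9_general hk G α hα w hw hadj
end

section
/- Let G be a nonabelian finite group of order p·q, where p and q are primes with q < p. Then G has exactly p subgroups of order q. -/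
/-!
Subgroups of order `q` are exactly the Sylow `q`-subgroups, and their number divides the
index `p`, so it is `1` or `p`. The number of Sylow `p`-subgroups divides `q < p` and is
`1 mod p`, so the Sylow `p`-subgroup `P` is normal. If the Sylow `q`-subgroup `Q` were normal
too, both `G ⧸ P` and `G ⧸ Q` would have prime order, hence be abelian, and the commutator
subgroup would lie in `P ⊓ Q = ⊥`.
-/

theorem Nat.Prime.factorization_self_mul_of_not_dvd {p m : ℕ} (hp : p.Prime) (hpm : ¬p ∣ m) :
    (p * m).factorization p = 1 := by
  have hm : m ≠ 0 := by rintro rfl; exact hpm (dvd_zero p)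
  rw [Nat.factorization_mul hp.ne_zero hm, Finsupp.add_apply, hp.factorization_self,
    Nat.factorization_eq_zero_of_not_dvd hpm]

theorem Subgroup.commutator_le_of_index_prime {G : Type*} [Group G] (N : Subgroup G) [N.Normal]
    (hN : N.index.Prime) : _root_.commutator G ≤ N := by
  have : Fact (Nat.card (G ⧸ N)).Prime := ⟨N.index_eq_card ▸ hN⟩
  have := isCyclic_of_prime_card (α := G ⧸ N) rfl
  exact Subgroup.Normal.quotient_commutative_iff_commutator_le.mp inferInstance

namespace Sylow

theorem normal_of_card_eq_one {G : Type*} [Group G] {p : ℕ} (h : Nat.card (Sylow p G) = 1)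
    (P : Sylow p G) : (P : Subgroup G).Normal :=
  have : Subsingleton (Sylow p G) := (Nat.card_eq_one_iff_unique.mp h).1
  P.normal_of_subsingleton

variable {G : Type*} [Group G] [Finite G] {p : ℕ} [Fact p.Prime]

theorem card_eq_card_subgroups :
    Nat.card (Sylow p G) =
      Nat.card {H : Subgroup G // Nat.card H = p ^ (Nat.card G).factorization p} :=
  Nat.card_congr
    { toFun := fun P => ⟨P, P.card_eq_multiplicity⟩
      invFun := fun H => ofCard H.1 H.2
      left_inv := fun _ => rfl
      right_inv := fun _ => rfl }

section

variable {m : ℕ} (hG : Nat.card G = p * m) (hpm : ¬p ∣ m)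
include hG hpm

theorem card_eq_card_subgroups_of_card_eq_mul :
    Nat.card (Sylow p G) = Nat.card {H : Subgroup G // Nat.card H = p} := by
  rw [card_eq_card_subgroups, hG, (Fact.out : p.Prime).factorization_self_mul_of_not_dvd hpm,
    pow_one]

theorem card_eq_of_card_eq_mul (P : Sylow p G) : Nat.card P = p := by
  rw [P.card_eq_multiplicity, hG, (Fact.out : p.Prime).factorization_self_mul_of_not_dvd hpm,
    pow_one]

theorem index_eq_of_card_eq_mul (P : Sylow p G) : (P : Subgroup G).index = m := by
  have h := (P : Subgroup G).card_mul_index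
  rw [card_eq_of_card_eq_mul hG hpm, hG] at h
  exact Nat.eq_of_mul_eq_mul_left (Fact.out : p.Prime).pos h

theorem card_dvd_of_card_eq_mul : Nat.card (Sylow p G) ∣ m := by
  obtain ⟨P⟩ : Nonempty (Sylow p G) := inferInstance
  exact index_eq_of_card_eq_mul hG hpm P ▸ P.card_dvd_index

end

theorem normal_of_card_eq_prime_mul_prime {q : ℕ} (hq : q.Prime) (hqp : q < p)
    (hG : Nat.card G = p * q) (P : Sylow p G) : (P : Subgroup G).Normal := by
  have hp : p.Prime := Fact.out
  have hpq : ¬p ∣ q := (Nat.prime_dvd_prime_iff_eq hp hq).not.mpr hqp.ne'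
  have hmod : Nat.card (Sylow p G) % p = 1 := by
    rw [card_sylow_modEq_one p G, Nat.mod_eq_of_lt hp.one_lt]
  rcases hq.eq_one_or_self_of_dvd _ (card_dvd_of_card_eq_mul hG hpq) with hone | hself
  · exact P.normal_of_card_eq_one hone
  · rw [hself, Nat.mod_eq_of_lt hqp] at hmod
    exact absurd hmod hq.one_lt.ne'

end Sylow

/-- A nonabelian finite group of order p·q, where p and q are primes with
q < p, has exactly p subgroups of order q. -/
theorem stmt_13 (p q : ℕ) (hp : p.Prime) (hq : q.Prime) (hqp : q < p)
    (G : Type*) [Group G] [Finite G] (hG : Nat.card G = p * q)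
    (hna : ∃ a b : G, a * b ≠ b * a) :
    Nat.card {H : Subgroup G // Nat.card H = q} = p := by
  have := Fact.mk hp
  have := Fact.mk hq
  have hG' : Nat.card G = q * p := hG.trans (mul_comm p q)
  have hpq : ¬p ∣ q := (Nat.prime_dvd_prime_iff_eq hp hq).not.mpr hqp.ne'
  have hqp' : ¬q ∣ p := (Nat.prime_dvd_prime_iff_eq hq hp).not.mpr hqp.ne
  rw [← Sylow.card_eq_card_subgroups_of_card_eq_mul hG' hqp']
  refine (hp.eq_one_or_self_of_dvd _ (Sylow.card_dvd_of_card_eq_mul hG' hqp')).resolve_left ?_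
  intro hnq
  obtain ⟨P⟩ : Nonempty (Sylow p G) := inferInstance
  obtain ⟨Q⟩ : Nonempty (Sylow q G) := inferInstance
  have := P.normal_of_card_eq_prime_mul_prime hq hqp hG
  have := Q.normal_of_card_eq_one hnq
  have hPQ : Disjoint (P : Subgroup G) Q := Subgroup.disjoint_of_coprime_natCard <| by
    rw [P.card_eq_of_card_eq_mul hG hpq, Q.card_eq_of_card_eq_mul hG' hqp']
    exact (Nat.coprime_primes hp hq).mpr hqp.ne'
  have hcommP := (P : Subgroup G).commutator_le_of_index_prime
    (P.index_eq_of_card_eq_mul hG hpq ▸ hq)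
  have hcommQ := (Q : Subgroup G).commutator_le_of_index_prime
    (Q.index_eq_of_card_eq_mul hG' hqp' ▸ hp)
  have := (commutator_eq_bot_iff G).mp (disjoint_self.mp (hPQ.mono hcommP hcommQ))
  obtain ⟨a, b, hab⟩ := hna
  exact hab (mul_comm' a b)
end

section
/- Let G be a group and p ≠ q primes, and let c, d ∈ G satisfy: the order of c is p, the order of d is q, and d·c = c^s·d for a natural number s with s^q ≡ 1 (mod p) and s ≢ 1 (mod p). Then for every natural number i, the element c^i·d has order q, and the cyclic subgroups ⟨c^i·d⟩ for i = 0, 1, …, p−1 are pairwise distinct (yielding p distinct subgroups of order q). -/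
open Finset

/-- Let G be a group, p ≠ q primes, and c, d ∈ G with orderOf c = p,
orderOf d = q, and d·c = c^s·d where s^q ≡ 1 (mod p) and s ≢ 1 (mod p). Then for every
natural number i the element c^i·d has order q, and the cyclic subgroups ⟨c^i·d⟩ for
i = 0, 1, …, p−1 are pairwise distinct (giving p distinct subgroups of order q). -/
theorem stmt_14 (p q s : ℕ) (hp : p.Prime) (hq : q.Prime) (hne : p ≠ q)
    (hs1 : s ^ q ≡ 1 [MOD p]) (hs2 : ¬ s ≡ 1 [MOD p])
    (G : Type*) [Group G] (c d : G)
    (hc : orderOf c = p) (hd : orderOf d = q) (hrel : d * c = c ^ s * d) :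
    (∀ i : ℕ, orderOf (c ^ i * d) = q) ∧
    ∀ i j : Fin p, i ≠ j →
      Subgroup.zpowers (c ^ (i : ℕ) * d) ≠ Subgroup.zpowers (c ^ (j : ℕ) * d) := by
  haveI : Fact p.Prime := ⟨hp⟩
  haveI : Fact q.Prime := ⟨hq⟩
  set S : ZMod p := (s : ZMod p) with hS
  have hS1 : S ^ q = 1 := by
    have h := (ZMod.natCast_eq_natCast_iff _ _ _).mpr hs1
    push_cast at h
    simpa [hS] using h
  have hS2 : S - 1 ≠ 0 := by
    intro h
    apply hs2
    have h1 : S = 1 := sub_eq_zero.mp h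
    exact (ZMod.natCast_eq_natCast_iff _ _ _).mp (by simpa [hS] using h1)
  have hcp : c ^ p = 1 := by rw [← hc]; exact pow_orderOf_eq_one c
  have hdq : d ^ q = 1 := by rw [← hd]; exact pow_orderOf_eq_one d
  -- conjugation
  have hconj : ∀ n : ℕ, d * c ^ n = c ^ (n * s) * d := by
    intro n
    have h1 : d * c * d⁻¹ = c ^ s := by rw [hrel]; group
    have h2 : d * c ^ n * d⁻¹ = c ^ (n * s) := by
      rw [← conj_pow (a := d) (b := c), h1, ← pow_mul, mul_comm s n]
    calc d * c ^ n = d * c ^ n * d⁻¹ * d := by group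
    _ = c ^ (n * s) * d := by rw [h2]
  have hconjk : ∀ k n : ℕ, d ^ k * c ^ n = c ^ (n * s ^ k) * d ^ k := by
    intro k
    induction k with
    | zero => intro n; simp
    | succ k ih =>
      intro n
      calc d ^ (k + 1) * c ^ n = d ^ k * (d * c ^ n) := by rw [pow_succ']; group
      _ = d ^ k * (c ^ (n * s) * d) := by rw [hconj]
      _ = (d ^ k * c ^ (n * s)) * d := by group
      _ = (c ^ (n * s * s ^ k) * d ^ k) * d := by rw [ih]
      _ = c ^ (n * s ^ (k + 1)) * d ^ (k + 1) := by
          rw [show n * s * s ^ k = n * s ^ (k + 1) by ring]; group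
  have key : ∀ n k : ℕ, (c ^ n * d) ^ k = c ^ (n * ∑ t ∈ range k, s ^ t) * d ^ k := by
    intro n k
    induction k with
    | zero => simp
    | succ k ih =>
      calc (c ^ n * d) ^ (k + 1) = (c ^ n * d) ^ k * (c ^ n * d) := pow_succ _ _
      _ = c ^ (n * ∑ t ∈ range k, s ^ t) * (d ^ k * c ^ n) * d := by rw [ih]; group
      _ = c ^ (n * ∑ t ∈ range k, s ^ t) * (c ^ (n * s ^ k) * d ^ k) * d := by rw [hconjk]
      _ = c ^ (n * ∑ t ∈ range k, s ^ t + n * s ^ k) * d ^ (k + 1) := by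
          rw [pow_add]; group
      _ = c ^ (n * ∑ t ∈ range (k + 1), s ^ t) * d ^ (k + 1) := by
          rw [Finset.sum_range_succ, mul_add]
  -- p divides the geometric sum over range q
  have hTq : p ∣ ∑ t ∈ range q, s ^ t := by
    rw [← ZMod.natCast_eq_zero_iff]
    have hg : (∑ t ∈ range q, S ^ t) * (S - 1) = S ^ q - 1 := geom_sum_mul S q
    rw [hS1, sub_self] at hg
    have h0 : (∑ t ∈ range q, S ^ t) = 0 := by
      rcases mul_eq_zero.mp hg with h | h
      · exact h
      · exact absurd h hS2
    push_cast
    exact h0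
  have hord : ∀ i : ℕ, orderOf (c ^ i * d) = q := by
    intro i
    apply orderOf_eq_prime
    · rw [key i q, hdq, mul_one]
      obtain ⟨t, ht⟩ := hTq
      rw [ht, show i * (p * t) = p * (i * t) by ring, pow_mul, hcp, one_pow]
    · intro h
      have h1 : (c ^ i)⁻¹ = d := mul_eq_one_iff_inv_eq.mp h
      have hdvd : q ∣ p := by
        rw [← hd, ← h1, orderOf_inv, ← hc]
        exact orderOf_pow_dvd i
      exact hne ((Nat.prime_dvd_prime_iff_eq hq hp).mp hdvd).symm
  refine ⟨hord, ?_⟩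
  intro i j hij heq
  have hmem : c ^ (j : ℕ) * d ∈ Subgroup.zpowers (c ^ (i : ℕ) * d) := by
    rw [heq]; exact Subgroup.mem_zpowers _
  obtain ⟨k, hk⟩ := Subgroup.mem_zpowers_iff.mp hmem
  set m : ℕ := (k % (q : ℤ)).toNat with hm
  have hqpos : (0 : ℤ) < q := by exact_mod_cast hq.pos
  have hmk : (c ^ (i : ℕ) * d) ^ m = c ^ (j : ℕ) * d := by
    have h1 : (c ^ (i : ℕ) * d) ^ (k % (q : ℤ)) = c ^ (j : ℕ) * d := by
      rw [show (q : ℤ) = (orderOf (c ^ (i : ℕ) * d) : ℤ) by rw [hord i], zpow_mod_orderOf, hk]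
    rw [← zpow_natCast, hm, Int.toNat_of_nonneg (Int.emod_nonneg k hqpos.ne')]
    exact h1
  rw [key] at hmk
  set Tm : ℕ := ∑ t ∈ range m, s ^ t with hTm
  -- extract the mixed relation
  have e2 : (c ^ ((i : ℕ) * Tm))⁻¹ * c ^ (j : ℕ) = d ^ m * d⁻¹ := by
    rw [inv_mul_eq_iff_eq_mul, ← mul_assoc, eq_mul_inv_iff_mul_eq]
    exact hmk.symm
  have hxc : c ^ ((j : ℤ) - ((i : ℕ) * Tm : ℕ)) = d ^ ((m : ℤ) - 1) := by
    calc c ^ ((j : ℤ) - ((i : ℕ) * Tm : ℕ)) = c ^ (-(((i : ℕ) * Tm : ℕ) : ℤ) + (j : ℤ)) := by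
          ring_nf
    _ = (c ^ ((i : ℕ) * Tm))⁻¹ * c ^ (j : ℕ) := by
          rw [zpow_add, zpow_neg, zpow_natCast, zpow_natCast]
    _ = d ^ m * d⁻¹ := e2
    _ = d ^ ((m : ℤ) - 1) := by rw [zpow_sub, zpow_natCast, zpow_one]
  have hx1 : d ^ ((m : ℤ) - 1) = 1 := by
    have hxp : (d ^ ((m : ℤ) - 1)) ^ (p : ℕ) = 1 := by
      rw [← hxc, ← zpow_natCast, ← zpow_mul, mul_comm, zpow_mul, zpow_natCast, hcp, one_zpow]
    have hxq : (d ^ ((m : ℤ) - 1)) ^ (q : ℕ) = 1 := by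
      rw [← zpow_natCast, ← zpow_mul, mul_comm, zpow_mul, zpow_natCast, hdq, one_zpow]
    have h1 : orderOf (d ^ ((m : ℤ) - 1)) ∣ p := orderOf_dvd_of_pow_eq_one hxp
    have h2 : orderOf (d ^ ((m : ℤ) - 1)) ∣ q := orderOf_dvd_of_pow_eq_one hxq
    have hcop : Nat.Coprime p q := (Nat.coprime_primes hp hq).mpr hne
    have : orderOf (d ^ ((m : ℤ) - 1)) = 1 :=
      Nat.eq_one_of_dvd_coprimes hcop h1 h2
    exact orderOf_eq_one_iff.mp this
  have hqm : (q : ℤ) ∣ (m : ℤ) - 1 := by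
    have h := orderOf_dvd_iff_zpow_eq_one.mpr hx1
    rwa [hd] at h
  have hpc : (p : ℤ) ∣ (j : ℤ) - ((i : ℕ) * Tm : ℕ) := by
    have h := orderOf_dvd_iff_zpow_eq_one.mpr (hxc.trans hx1)
    rwa [hc] at h
  -- m = q*t + 1
  have hm1 : 1 ≤ m := by
    rcases Nat.eq_zero_or_pos m with hm0 | h
    · exfalso
      rw [hm0] at hqm
      have h1 : (q : ℤ) ∣ 1 := by simpa using hqm
      have h2 := Int.le_of_dvd one_pos h1
      have h3 := hq.two_le
      omega
    · exact h
  obtain ⟨u, hu⟩ : q ∣ m - 1 := by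
    have : ((m - 1 : ℕ) : ℤ) = (m : ℤ) - 1 := by push_cast [hm1]; ring
    exact_mod_cast this ▸ hqm
  have hmval : m = q * u + 1 := by omega
  have hTm1 : ((Tm : ℕ) : ZMod p) = 1 := by
    have hg : (∑ x ∈ range m, S ^ x) * (S - 1) = S ^ m - 1 := geom_sum_mul S m
    have hpow : S ^ m = S := by
      rw [hmval, pow_succ, pow_mul, hS1, one_pow, one_mul]
    rw [hpow] at hg
    have h0 : (∑ x ∈ range m, S ^ x) = 1 := mul_right_cancel₀ hS2 (by rw [hg, one_mul])
    rw [hTm]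
    push_cast
    exact h0
  have hfin : ((j : ℕ) : ZMod p) = ((i : ℕ) : ZMod p) := by
    have h0 : (((j : ℤ) - ((i : ℕ) * Tm : ℕ) : ℤ) : ZMod p) = 0 :=
      (ZMod.intCast_zmod_eq_zero_iff_dvd _ _).mpr hpc
    push_cast at h0
    rw [hTm1, mul_one] at h0
    exact sub_eq_zero.mp h0
  have : (i : ℕ) = (j : ℕ) := by
    have hmod := (ZMod.natCast_eq_natCast_iff _ _ _).mp hfin
    have := hmod.symm
    unfold Nat.ModEq at this
    rw [Nat.mod_eq_of_lt i.isLt, Nat.mod_eq_of_lt j.isLt] at this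
    exact this
  exact hij (Fin.ext this)
end
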